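/- arXiv:2407.12670 — 2 statements merged into one kernel-verified Lean document; each statement's English description precedes it below -/
import Mathlib

section
/- Let Q ∈ ℂ^{m×n} (n < m) have orthonormal columns, z ∈ ℂ^m, u = QQ*z ≠ 0, v = (I − QQ*)z ≠ 0. Then both u and v lie in the range of QQ* + zz*. In particular, (QQ* + zz*)(u/‖u‖² − v/‖v‖²) = u/‖u‖². -/
/-!
`P = QQᴴ` is an orthogonal projection, so `u = Pz` and `v = (1 - P)z` are orthogonal and
`zᴴu = ‖u‖²`, `zᴴv = ‖v‖²`. Hence `A = P + zzᴴ` maps `u/‖u‖²` to `u/‖u‖² + z` and `v/‖v‖²`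
to `z`; subtracting gives `A(u/‖u‖² − v/‖v‖²) = u/‖u‖²`, and `u`, `v = z − u` lie in the
range of `A`.
-/

open Matrix
open scoped ComplexOrder

namespace Matrix

variable {ι 𝕜 : Type*} [Fintype ι] [RCLike 𝕜]

lemma ofReal_sum_norm_sq (x : ι → 𝕜) : ((∑ i, ‖x i‖ ^ 2 : ℝ) : 𝕜) = star x ⬝ᵥ x := by
  simp only [dotProduct, Pi.star_apply, RCLike.star_def, RCLike.conj_mul, RCLike.ofReal_sum,
    RCLike.ofReal_pow]

lemma IsHermitian.star_dotProduct_mulVec_self {P : Matrix ι ι 𝕜} (hP : P.IsHermitian)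
    (hPP : IsIdempotentElem P) (z : ι → 𝕜) :
    star z ⬝ᵥ (P *ᵥ z) = star (P *ᵥ z) ⬝ᵥ (P *ᵥ z) := by
  rw [star_mulVec, ← dotProduct_mulVec, mulVec_mulVec, hP.eq, hPP.eq]

lemma isIdempotentElem_mul_conjTranspose_self {κ : Type*} [Fintype κ]
    [DecidableEq κ] {Q : Matrix ι κ 𝕜} (hQ : Qᴴ * Q = 1) :
    IsIdempotentElem (Q * Qᴴ) := by
  rw [IsIdempotentElem, Matrix.mul_assoc, ← Matrix.mul_assoc Qᴴ, hQ, Matrix.one_mul]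

lemma add_vecMulVec_mulVec (P : Matrix ι ι 𝕜) (z x : ι → 𝕜) :
    (P + vecMulVec z (star z)) *ᵥ x = P *ᵥ x + (star z ⬝ᵥ x) • z := by
  rw [add_mulVec, vecMulVec_mulVec, op_smul_eq_smul]

lemma add_vecMulVec_mulVec_inv_smul (P : Matrix ι ι 𝕜) {z x : ι → 𝕜}
    (hzx : star z ⬝ᵥ x = star x ⬝ᵥ x) (hx : x ≠ 0) :
    (P + vecMulVec z (star z)) *ᵥ ((star x ⬝ᵥ x)⁻¹ • x)
      = (star x ⬝ᵥ x)⁻¹ • (P *ᵥ x) + z := by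
  rw [add_vecMulVec_mulVec, mulVec_smul, dotProduct_smul, hzx, smul_eq_mul,
    inv_mul_cancel₀ (dotProduct_star_self_eq_zero.not.mpr hx), one_smul]

lemma IsHermitian.add_vecMulVec_mulVec_inv_smul_of_eq_mulVec {P : Matrix ι ι 𝕜}
    (hP : P.IsHermitian) (hPP : IsIdempotentElem P) {z u : ι → 𝕜} (hu : u = P *ᵥ z)
    (hu0 : u ≠ 0) :
    (P + vecMulVec z (star z)) *ᵥ ((star u ⬝ᵥ u)⁻¹ • u) = (star u ⬝ᵥ u)⁻¹ • u + z := by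
  have hPu : P *ᵥ u = u := by rw [hu, mulVec_mulVec, hPP.eq]
  have hzu : star z ⬝ᵥ u = star u ⬝ᵥ u := hu ▸ hP.star_dotProduct_mulVec_self hPP z
  rw [add_vecMulVec_mulVec_inv_smul P hzu hu0, hPu]

lemma IsHermitian.add_vecMulVec_mulVec_inv_smul_of_eq_sub_mulVec [DecidableEq ι]
    {P : Matrix ι ι 𝕜} (hP : P.IsHermitian) (hPP : IsIdempotentElem P) {z v : ι → 𝕜}
    (hv : v = z - P *ᵥ z) (hv0 : v ≠ 0) :
    (P + vecMulVec z (star z)) *ᵥ ((star v ⬝ᵥ v)⁻¹ • v) = z := by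
  have hv' : v = (1 - P) *ᵥ z := by rw [hv, sub_mulVec, one_mulVec]
  have hPv : P *ᵥ v = 0 := by rw [hv', mulVec_mulVec, hPP.mul_one_sub_self, zero_mulVec]
  have hzv : star z ⬝ᵥ v = star v ⬝ᵥ v :=
    hv' ▸ (isHermitian_one.sub hP).star_dotProduct_mulVec_self hPP.one_sub z
  rw [add_vecMulVec_mulVec_inv_smul P hzv hv0, hPv, smul_zero, zero_add]

end Matrix

theorem stmt5_general {m n : ℕ} (Q : Matrix (Fin m) (Fin n) ℂ)
    (hQ : Qᴴ * Q = 1) (z u v : Fin m → ℂ)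
    (hu : u = (Q * Qᴴ) *ᵥ z) (hv : v = z - u)
    (hu0 : u ≠ 0) (hv0 : v ≠ 0) :
    (∃ x : Fin m → ℂ, (Q * Qᴴ + vecMulVec z (star z)) *ᵥ x = u) ∧
    (∃ x : Fin m → ℂ, (Q * Qᴴ + vecMulVec z (star z)) *ᵥ x = v) ∧
    (Q * Qᴴ + vecMulVec z (star z)) *ᵥ
        ((((∑ i, ‖u i‖ ^ 2)⁻¹ : ℝ) : ℂ) • u - (((∑ i, ‖v i‖ ^ 2)⁻¹ : ℝ) : ℂ) • v)
      = (((∑ i, ‖u i‖ ^ 2)⁻¹ : ℝ) : ℂ) • u := by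
  have hP := isHermitian_mul_conjTranspose_self Q
  have hPP := isIdempotentElem_mul_conjTranspose_self hQ
  have hAu := hP.add_vecMulVec_mulVec_inv_smul_of_eq_mulVec hPP hu hu0
  have hAv := hP.add_vecMulVec_mulVec_inv_smul_of_eq_sub_mulVec hPP (hu ▸ hv) hv0
  set α := star u ⬝ᵥ u
  set β := star v ⬝ᵥ v
  have hA_sub : (Q * Qᴴ + vecMulVec z (star z)) *ᵥ (α⁻¹ • u - β⁻¹ • v) = α⁻¹ • u := by
    rw [mulVec_sub, hAu, hAv, add_sub_cancel_right]
  have hα : α ≠ 0 := dotProduct_star_self_eq_zero.not.mpr hu0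
  refine ⟨⟨α • (α⁻¹ • u - β⁻¹ • v), ?_⟩, ⟨β⁻¹ • v - α • (α⁻¹ • u - β⁻¹ • v), ?_⟩, ?_⟩
  · rw [mulVec_smul, hA_sub, smul_inv_smul₀ hα]
  · rw [mulVec_sub, hAv, mulVec_smul, hA_sub, smul_inv_smul₀ hα, hv]
  · have hu2 : ((∑ i, ‖u i‖ ^ 2 : ℝ) : ℂ) = α := ofReal_sum_norm_sq u
    have hv2 : ((∑ i, ‖v i‖ ^ 2 : ℝ) : ℂ) = β := ofReal_sum_norm_sq v
    rwa [Complex.ofReal_inv, Complex.ofReal_inv, hu2, hv2]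

/-- both `u` and `v` lie in the range of `Q Qᴴ + z zᴴ`;
in particular `(QQᴴ + zzᴴ)(u/‖u‖² − v/‖v‖²) = u/‖u‖²`. -/
theorem stmt5 {m n : ℕ} (hmn : n < m) (Q : Matrix (Fin m) (Fin n) ℂ)
    (hQ : Qᴴ * Q = 1) (z u v : Fin m → ℂ)
    (hu : u = (Q * Qᴴ) *ᵥ z) (hv : v = z - u)
    (hu0 : u ≠ 0) (hv0 : v ≠ 0) :
    (∃ x : Fin m → ℂ, (Q * Qᴴ + vecMulVec z (star z)) *ᵥ x = u) ∧
    (∃ x : Fin m → ℂ, (Q * Qᴴ + vecMulVec z (star z)) *ᵥ x = v) ∧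
    (Q * Qᴴ + vecMulVec z (star z)) *ᵥ
        ((((∑ i, ‖u i‖ ^ 2)⁻¹ : ℝ) : ℂ) • u - (((∑ i, ‖v i‖ ^ 2)⁻¹ : ℝ) : ℂ) • v)
      = (((∑ i, ‖u i‖ ^ 2)⁻¹ : ℝ) : ℂ) • u :=
  stmt5_general Q hQ z u v hu hv hu0 hv0
end

section
/- For fixed η ∈ (0,1), the function ν ↦ K(ν, η) = (1 + ν² + √(1 + ν⁴ + 2ν² − 4η²ν²)) / (1 + ν² − √(1 + ν⁴ + 2ν² − 4η²ν²)) on (0, ∞) is strictly decreasing on (0,1), strictly increasing on (1,∞), and attains its global minimum at ν = 1. -/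
/-!
With `t = (ν + ν⁻¹)/2 ≥ 1` and `s = √(t² - η²)`, the discriminant factors as
`1 + ν⁴ + 2ν² - 4η²ν² = (2ν)² s²`, so `K(ν, η) = (t + s)/(t - s)`: the ratio of the roots
`t ± s` of `λ² - 2tλ + η²`. Their product is `η²`, hence `K = ((t + s)/η)²`, which is strictly
increasing in `t ≥ η`. The monotonicity of `K` in `ν` is thus that of the Joukowsky map
`ν ↦ (ν + ν⁻¹)/2`, which decreases on `(0, 1]`, increases on `[1, ∞)` and is minimal at `ν = 1`.
-/

open Set

noncomputable section

def condK (η ν : ℝ) : ℝ :=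
  (1 + ν ^ 2 + Real.sqrt (1 + ν ^ 4 + 2 * ν ^ 2 - 4 * η ^ 2 * ν ^ 2)) /
    (1 + ν ^ 2 - Real.sqrt (1 + ν ^ 4 + 2 * ν ^ 2 - 4 * η ^ 2 * ν ^ 2))

def joukowsky (x : ℝ) : ℝ := (x + x⁻¹) / 2

def rootRatio (η t : ℝ) : ℝ := ((t + Real.sqrt (t ^ 2 - η ^ 2)) / η) ^ 2

lemma joukowsky_sub {x y : ℝ} (hx : x ≠ 0) (hy : y ≠ 0) :
    joukowsky x - joukowsky y = (x - y) * (x * y - 1) / (2 * x * y) := by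
  unfold joukowsky
  field_simp
  ring

lemma joukowsky_one : joukowsky 1 = 1 := by norm_num [joukowsky]

lemma one_le_joukowsky {x : ℝ} (hx : 0 < x) : 1 ≤ joukowsky x := by
  have h := joukowsky_sub hx.ne' one_ne_zero
  rw [joukowsky_one, mul_one, ← sq] at h
  have : 0 ≤ (x - 1) ^ 2 / (2 * x * 1) := by positivity
  linarith

lemma joukowsky_strictAntiOn : StrictAntiOn joukowsky (Ioc 0 1) := by
  rintro x ⟨hx0, hx1⟩ y ⟨hy0, hy1⟩ hxy
  have h := joukowsky_sub hx0.ne' hy0.ne'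
  have : (x - y) * (x * y - 1) / (2 * x * y) > 0 :=
    div_pos (mul_pos_of_neg_of_neg (by linarith) (by nlinarith)) (by positivity)
  linarith

lemma joukowsky_strictMonoOn : StrictMonoOn joukowsky (Ici 1) := by
  rintro x (hx1 : 1 ≤ x) y (hy1 : 1 ≤ y) hxy
  have h := joukowsky_sub (by positivity : x ≠ 0) (by positivity : y ≠ 0)
  have : (x - y) * (x * y - 1) / (2 * x * y) < 0 :=
    div_neg_of_neg_of_pos (mul_neg_of_neg_of_pos (by linarith) (by nlinarith)) (by positivity)
  linarith

lemma rootRatio_strictMonoOn {η : ℝ} (hη : 0 < η) : StrictMonoOn (rootRatio η) (Ici η) := by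
  rintro t₁ (h₁ : η ≤ t₁) t₂ (h₂ : η ≤ t₂) h₁₂
  have hsqrt : Real.sqrt (t₁ ^ 2 - η ^ 2) ≤ Real.sqrt (t₂ ^ 2 - η ^ 2) :=
    Real.sqrt_le_sqrt (by nlinarith)
  have hnonneg : 0 ≤ (t₁ + Real.sqrt (t₁ ^ 2 - η ^ 2)) / η :=
    div_nonneg (add_nonneg (hη.le.trans h₁) (Real.sqrt_nonneg _)) hη.le
  exact pow_lt_pow_left₀ (div_lt_div_of_pos_right (by linarith) hη) hnonneg two_ne_zero

lemma add_sqrt_div_sub_sqrt {η t : ℝ} (hη : 0 < η) (ht : η ≤ t) :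
    (t + Real.sqrt (t ^ 2 - η ^ 2)) / (t - Real.sqrt (t ^ 2 - η ^ 2)) = rootRatio η t := by
  set s := Real.sqrt (t ^ 2 - η ^ 2)
  have hs : s ^ 2 = t ^ 2 - η ^ 2 := Real.sq_sqrt (by nlinarith)
  -- `(t + s)(t - s) = η²`, so `t - s > 0`
  have hts : 0 < t - s := by nlinarith [Real.sqrt_nonneg (t ^ 2 - η ^ 2)]
  unfold rootRatio
  rw [div_pow, div_eq_div_iff hts.ne' (by positivity)]
  nlinarith

lemma sqrt_discr_eq {η ν : ℝ} (hν : 0 < ν) :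
    Real.sqrt (1 + ν ^ 4 + 2 * ν ^ 2 - 4 * η ^ 2 * ν ^ 2)
      = 2 * ν * Real.sqrt (joukowsky ν ^ 2 - η ^ 2) := by
  rw [show 1 + ν ^ 4 + 2 * ν ^ 2 - 4 * η ^ 2 * ν ^ 2 = (2 * ν) ^ 2 * (joukowsky ν ^ 2 - η ^ 2) by
      unfold joukowsky; field_simp; ring,
    Real.sqrt_mul (by positivity), Real.sqrt_sq (by positivity)]

lemma condK_eq_rootRatio {η ν : ℝ} (hη0 : 0 < η) (hη1 : η ≤ 1) (hν : 0 < ν) :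
    condK η ν = rootRatio η (joukowsky ν) := by
  have hsum : 1 + ν ^ 2 = 2 * ν * joukowsky ν := by unfold joukowsky; field_simp; ring
  rw [condK, sqrt_discr_eq hν, hsum, ← mul_add, ← mul_sub,
    mul_div_mul_left _ _ (by positivity),
    add_sqrt_div_sub_sqrt hη0 (hη1.trans (one_le_joukowsky hν))]

/-- for fixed `η ∈ (0,1)`, the squared condition number
`K(·,η)` is strictly decreasing on `(0,1)`, strictly increasing on `(1,∞)`,
and attains its global minimum over `(0,∞)` at `ν = 1`. -/
theorem stmt12 (η : ℝ) (hη0 : 0 < η) (hη1 : η < 1) :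
    StrictAntiOn
      (fun x : ℝ =>
        (1 + x ^ 2 + Real.sqrt (1 + x ^ 4 + 2 * x ^ 2 - 4 * η ^ 2 * x ^ 2)) /
          (1 + x ^ 2 - Real.sqrt (1 + x ^ 4 + 2 * x ^ 2 - 4 * η ^ 2 * x ^ 2)))
      (Set.Ioo 0 1) ∧
    StrictMonoOn
      (fun x : ℝ =>
        (1 + x ^ 2 + Real.sqrt (1 + x ^ 4 + 2 * x ^ 2 - 4 * η ^ 2 * x ^ 2)) /
          (1 + x ^ 2 - Real.sqrt (1 + x ^ 4 + 2 * x ^ 2 - 4 * η ^ 2 * x ^ 2)))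
      (Set.Ioi 1) ∧
    (∀ x : ℝ, 0 < x →
      (1 + (1 : ℝ) ^ 2 + Real.sqrt (1 + 1 ^ 4 + 2 * 1 ^ 2 - 4 * η ^ 2 * 1 ^ 2)) /
          (1 + (1 : ℝ) ^ 2 - Real.sqrt (1 + 1 ^ 4 + 2 * 1 ^ 2 - 4 * η ^ 2 * 1 ^ 2)) ≤
        (1 + x ^ 2 + Real.sqrt (1 + x ^ 4 + 2 * x ^ 2 - 4 * η ^ 2 * x ^ 2)) /
          (1 + x ^ 2 - Real.sqrt (1 + x ^ 4 + 2 * x ^ 2 - 4 * η ^ 2 * x ^ 2))) := by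
  change StrictAntiOn (condK η) _ ∧ StrictMonoOn (condK η) _ ∧ ∀ x, 0 < x → condK η 1 ≤ condK η x
  have hK : EqOn (rootRatio η ∘ joukowsky) (condK η) (Ioi 0) := fun ν hν =>
    (condK_eq_rootRatio hη0 hη1.le hν).symm
  have hmaps : MapsTo joukowsky (Ioi 0) (Ici η) := fun ν hν =>
    hη1.le.trans (one_le_joukowsky hν)
  have hg := rootRatio_strictMonoOn hη0
  refine ⟨?_, ?_, fun x hx => ?_⟩
  · exact (hg.comp_strictAntiOn (joukowsky_strictAntiOn.mono Ioo_subset_Ioc_self)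
      (hmaps.mono_left Ioo_subset_Ioi_self)).congr (hK.mono Ioo_subset_Ioi_self)
  · have hsub : Ioi (1 : ℝ) ⊆ Ioi 0 := Ioi_subset_Ioi zero_le_one
    exact (hg.comp (joukowsky_strictMonoOn.mono Ioi_subset_Ici_self) (hmaps.mono_left hsub)).congr
      (hK.mono hsub)
  · rw [← hK (mem_Ioi.2 one_pos), ← hK hx, Function.comp_apply, Function.comp_apply,
      joukowsky_one]
    exact hg.monotoneOn (mem_Ici.2 hη1.le) (hmaps hx) (one_le_joukowsky hx)

end
end
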